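/- Let G be a locally compact abelian group with Haar measure μ acting by *-automorphisms α on a unital C*-algebra 𝔘, and ω a state such that for some net of measurable sets U_i ⊆ G of finite positive measure, lim_i (1/μ(U_i)) ∫_{U_i} (ω(α_g(A)B) − ω(α_g A)ω(B)) dμ(g) = 0 for all A, B ∈ 𝔘. Then for every n ≥ 2 and all A_1,...,A_n ∈ 𝔘, lim_i (1/μ(U_i)) ∫_{U_i} c_n(α_g A_1, A_2, ..., A_n) dμ(g) = 0, and the same holds for the free cumulants κ_n. -/

import Mathlib

open scoped Classical
open Filter Topology

noncomputable section

/-- `π` is a set-partition of the finite set `S ⊆ ℕ`: a collection of nonempty subsets of `S`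
such that every element of `S` lies in exactly one of them. -/
def IsSetPartition (S : Finset ℕ) (π : Finset (Finset ℕ)) : Prop :=
  (∀ V ∈ π, V ⊆ S) ∧ (∀ V ∈ π, V.Nonempty) ∧ ∀ a ∈ S, ∃! V, V ∈ π ∧ a ∈ V

/-- The finset of all set-partitions of `S`. -/
def setPartitions (S : Finset ℕ) : Finset (Finset (Finset ℕ)) :=
  S.powerset.powerset.filter (IsSetPartition S)

/-- A family of blocks is non-crossing if there are no `a < b < c < d` with `a, c` in one
block and `b, d` in a different block. -/
def IsNonCrossing (π : Finset (Finset ℕ)) : Prop :=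
  ¬ ∃ a b c d : ℕ, a < b ∧ b < c ∧ c < d ∧
      ∃ V ∈ π, ∃ W ∈ π, V ≠ W ∧ a ∈ V ∧ c ∈ V ∧ b ∈ W ∧ d ∈ W

/-- The finset of all non-crossing partitions of `S`. -/
def ncPartitions (S : Finset ℕ) : Finset (Finset (Finset ℕ)) :=
  (setPartitions S).filter IsNonCrossing

variable {𝔘 : Type*}

/-- The ordered list `A_{i_1}, …, A_{i_s}` of observables indexed by `V = {i_1 < ⋯ < i_s}`. -/
def blockList (A : ℕ → 𝔘) (V : Finset ℕ) : List 𝔘 :=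
  (V.sort (· ≤ ·)).map A

/-- The ordered product `A_{i_1} ⋯ A_{i_s}` over the block `V = {i_1 < ⋯ < i_s}`. -/
def blockProd [Monoid 𝔘] (A : ℕ → 𝔘) (V : Finset ℕ) : 𝔘 :=
  (blockList A V).prod

/-- The joint classical cumulant of `ω` of the observables `A_i`, `i ∈ S` (order preserved):
`c(S) = ∑_{π ∈ P(S)} (-1)^{|π|-1}(|π|-1)! ∏_{V ∈ π} ω(∏_{i ∈ V} A_i)`. -/
def cumulant [Monoid 𝔘] (ω : 𝔘 → ℂ) (A : ℕ → 𝔘) (S : Finset ℕ) : ℂ :=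
  ∑ π ∈ setPartitions S,
    (-1 : ℂ) ^ (π.card - 1) * ((π.card - 1).factorial : ℂ) * ∏ V ∈ π, ω (blockProd A V)

/-- `κ` (as a function of the ordered list of observables) is the family of free cumulants of
`ω`: it satisfies the moments-to-free-cumulants formula over non-crossing partitions. -/
def IsFreeCumulantFamily [Monoid 𝔘] (ω : 𝔘 → ℂ) (κ : List 𝔘 → ℂ) : Prop :=
  ∀ (A : ℕ → 𝔘) (S : Finset ℕ), S.Nonempty →
    ω (blockProd A S) = ∑ π ∈ ncPartitions S, ∏ V ∈ π, κ (blockList A V)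

/-- A state on a unital C*-algebra: a positive unital linear functional. -/
structure IsState [NormedRing 𝔘] [StarRing 𝔘] [NormedAlgebra ℂ 𝔘] (ω : 𝔘 →ₗ[ℂ] ℂ) : Prop where
  unital : ω 1 = 1
  positive : ∀ a : 𝔘, 0 ≤ (ω (star a * a)).re ∧ (ω (star a * a)).im = 0

/-- `α` is a representation of the group `G` by *-automorphisms. -/
def IsStarAutoRep {G : Type*} [Monoid G] [Ring 𝔘] [Algebra ℂ 𝔘] [StarRing 𝔘]
    (α : G → 𝔘 ≃⋆ₐ[ℂ] 𝔘) : Prop :=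
  ∀ (g h : G) (x : 𝔘), α (g * h) x = α g (α h x)

/-!
Both cumulants are computed from the moment-cumulant formulas by isolating the block `B` that
contains the index `1`. For classical cumulants, subtracting `ω(α_g A_1)` times the cumulant with
`A_1` replaced by the unit, which vanishes, turns every term into a constant times a covariance
`ω(α_g(A_1) C) - ω(α_g A_1) ω(C)` with `C = ∏_{i ∈ B \ {1}} A_i`. The unit cumulant vanishes
because a partition of `S` is a partition of `S \ {1}` with `1` added to one of its blocks or as a
new block, and the Möbius weights of these extensions cancel. For free cumulants, the non-crossing
partitions in which `1` is a singleton contribute `ω(α_g A_1) ω(A_2 ⋯ A_n)`, so `κ_n` is the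
covariance of `α_g A_1` and `A_2 ⋯ A_n` minus constants times free cumulants of fewer variables
starting with `α_g A_1`, and induction on the number of variables applies. In both cases one only
uses that the functions of `g` with vanishing averages form a vector space containing the
covariances; they are integrable because states are bounded.
-/
open Finset

lemma mem_setPartitions {S : Finset ℕ} {π : Finset (Finset ℕ)} :
    π ∈ setPartitions S ↔ IsSetPartition S π := by
  simp only [setPartitions, mem_filter, mem_powerset, and_iff_right_iff_imp]
  exact fun h V hV => mem_powerset.2 (h.1 V hV)

lemma mem_ncPartitions {S : Finset ℕ} {π : Finset (Finset ℕ)} :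
    π ∈ ncPartitions S ↔ IsSetPartition S π ∧ IsNonCrossing π := by
  rw [ncPartitions, mem_filter, mem_setPartitions]

def blockOf (π : Finset (Finset ℕ)) (a : ℕ) : Finset ℕ :=
  (π.filter (a ∈ ·)).sup id

namespace IsSetPartition

variable {S T V W : Finset ℕ} {π : Finset (Finset ℕ)} {a : ℕ}

lemma mk' (hsub : ∀ V ∈ π, V ⊆ S) (hne : ∀ V ∈ π, V.Nonempty)
    (hcover : ∀ a ∈ S, ∃ V ∈ π, a ∈ V)
    (hdisj : ∀ V ∈ π, ∀ W ∈ π, ∀ a, a ∈ V → a ∈ W → V = W) : IsSetPartition S π :=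
  ⟨hsub, hne, fun a ha => by
    obtain ⟨V, hV, haV⟩ := hcover a ha
    exact ⟨V, ⟨hV, haV⟩, fun W hW => hdisj W hW.1 V hV a hW.2 haV⟩⟩

lemma block_eq (h : IsSetPartition S π) (hV : V ∈ π) (hW : W ∈ π) (haV : a ∈ V) (haW : a ∈ W) :
    V = W := by
  obtain ⟨U, -, hU⟩ := h.2.2 a (h.1 V hV haV)
  rw [hU V ⟨hV, haV⟩, hU W ⟨hW, haW⟩]

lemma empty_notMem (h : IsSetPartition S π) : ∅ ∉ π :=
  fun h0 => (h.2.1 ∅ h0).ne_empty rfl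

lemma notMem_of_erase (h : IsSetPartition (S.erase a) π) (hV : V ∈ π) : a ∉ V :=
  fun haV => (mem_erase.1 (h.1 V hV haV)).1 rfl

lemma eq_singleton (h : IsSetPartition S π) (hS : S ∈ π) : π = {S} := by
  refine eq_singleton_iff_unique_mem.2 ⟨hS, fun W hW => ?_⟩
  obtain ⟨a, ha⟩ := h.2.1 W hW
  exact h.block_eq hW hS ha (h.1 W hW ha)

lemma insert_of_disjoint (h : IsSetPartition T π) (hV : V.Nonempty) (hVT : Disjoint V T) :
    IsSetPartition (V ∪ T) (insert V π) := by
  refine mk' ?_ ?_ ?_ ?_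
  · simp only [forall_mem_insert]
    exact ⟨subset_union_left, fun W hW => (h.1 W hW).trans subset_union_right⟩
  · simp only [forall_mem_insert]
    exact ⟨hV, h.2.1⟩
  · intro b hb
    rcases mem_union.1 hb with hbV | hbT
    · exact ⟨V, mem_insert_self V π, hbV⟩
    · obtain ⟨W, ⟨hW, hbW⟩, -⟩ := h.2.2 b hbT
      exact ⟨W, mem_insert_of_mem hW, hbW⟩
  · have hout : ∀ W ∈ π, ∀ b, b ∈ V → b ∉ W := fun W hW b hbV hbW =>
      disjoint_left.1 hVT hbV (h.1 W hW hbW)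
    intro W₁ hW₁ W₂ hW₂ b hb₁ hb₂
    rw [mem_insert] at hW₁ hW₂
    rcases hW₁ with rfl | hW₁ <;> rcases hW₂ with rfl | hW₂
    · rfl
    · exact absurd hb₂ (hout _ hW₂ b hb₁)
    · exact absurd hb₁ (hout _ hW₁ b hb₂)
    · exact h.block_eq hW₁ hW₂ hb₁ hb₂

lemma erase_of_mem (h : IsSetPartition T π) (hV : V ∈ π) :
    IsSetPartition (T \ V) (π.erase V) := by
  refine mk' (fun W hW => ?_) (fun W hW => h.2.1 W (mem_of_mem_erase hW))
    (fun b hb => ?_) (fun W hW W' hW' b => h.block_eq (mem_of_mem_erase hW) (mem_of_mem_erase hW'))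
  · obtain ⟨hWV, hW⟩ := mem_erase.1 hW
    exact fun b hbW => mem_sdiff.2 ⟨h.1 W hW hbW, fun hbV => hWV (h.block_eq hW hV hbW hbV)⟩
  · obtain ⟨hbT, hbV⟩ := mem_sdiff.1 hb
    obtain ⟨W, ⟨hW, hbW⟩, -⟩ := h.2.2 b hbT
    exact ⟨W, mem_erase.2 ⟨fun hWV => hbV (hWV ▸ hbW), hW⟩, hbW⟩

lemma blockOf_eq (h : IsSetPartition S π) (hV : V ∈ π) (haV : a ∈ V) : blockOf π a = V := by
  have : π.filter (a ∈ ·) = {V} := by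
    ext W
    simp only [mem_filter, mem_singleton]
    exact ⟨fun hW => h.block_eq hW.1 hV hW.2 haV, fun hW => hW ▸ ⟨hV, haV⟩⟩
  rw [blockOf, this, sup_singleton, id]

lemma blockOf_mem (h : IsSetPartition S π) (ha : a ∈ S) : blockOf π a ∈ π ∧ a ∈ blockOf π a := by
  obtain ⟨V, ⟨hV, haV⟩, -⟩ := h.2.2 a ha
  rw [h.blockOf_eq hV haV]
  exact ⟨hV, haV⟩

lemma notMem_of_mem_erase_blockOf (h : IsSetPartition S π) (ha : a ∈ S)
    (hV : V ∈ π.erase (blockOf π a)) : a ∉ V := fun haV =>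
  ne_of_mem_erase hV
    (h.block_eq (mem_of_mem_erase hV) (h.blockOf_mem ha).1 haV (h.blockOf_mem ha).2)

lemma prod_eq_mul_prod_erase_blockOf {M : Type*} [CommMonoid M] (h : IsSetPartition S π)
    (ha : a ∈ S) {F G : Finset ℕ → M} (hFG : ∀ V, a ∉ V → F V = G V) :
    ∏ V ∈ π, F V = F (blockOf π a) * ∏ V ∈ π.erase (blockOf π a), G V := by
  rw [← mul_prod_erase π F (h.blockOf_mem ha).1]
  exact congrArg _ (prod_congr rfl fun V hV => hFG V (h.notMem_of_mem_erase_blockOf ha hV))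

lemma isLeast_blockOf (h : IsSetPartition S π) (ha : IsLeast (S : Set ℕ) a) :
    IsLeast (blockOf π a : Set ℕ) a :=
  ⟨(h.blockOf_mem ha.1).2, fun _ hb => ha.2 (h.1 _ (h.blockOf_mem ha.1).1 hb)⟩

lemma blockOf_ssubset (h : IsSetPartition S π) (ha : a ∈ S) (hπ : π ≠ {S}) : blockOf π a ⊂ S :=
  Finset.ssubset_iff_subset_ne.2 ⟨h.1 _ (h.blockOf_mem ha).1,
    fun hS => hπ (h.eq_singleton (hS ▸ (h.blockOf_mem ha).1))⟩

lemma blockOf_nontrivial (h : IsSetPartition S π) (ha : a ∈ S) (hπ : ({a} : Finset ℕ) ∉ π) :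
    (blockOf π a).Nontrivial :=
  ((eq_singleton_or_nontrivial (h.blockOf_mem ha).2).resolve_left
    fun hB => hπ (hB ▸ (h.blockOf_mem ha).1))

end IsSetPartition

/-- For `V = ∅` this adds the singleton block `{a}`, since a partition has no empty block. -/
def addToBlock (a : ℕ) (π : Finset (Finset ℕ)) (V : Finset ℕ) : Finset (Finset ℕ) :=
  insert (insert a V) (π.erase V)

/-- When the block of `a` is `{a}`, removing `a` leaves `∅`, which the final `erase` discards. -/
def removeFromBlock (a : ℕ) (π : Finset (Finset ℕ)) : Finset (Finset ℕ) :=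
  (insert ((blockOf π a).erase a) (π.erase (blockOf π a))).erase ∅

section AddToBlock

variable {S v : Finset ℕ} {π π' : Finset (Finset ℕ)} {a : ℕ}

lemma IsSetPartition.notMem_of_mem_insert_empty (h : IsSetPartition (S.erase a) π')
    (hv : v ∈ insert ∅ π') : a ∉ v := by
  rcases mem_insert.1 hv with rfl | hv
  · exact notMem_empty a
  · exact h.notMem_of_erase hv

lemma IsSetPartition.addToBlock (ha : a ∈ S) (h : IsSetPartition (S.erase a) π')
    (hv : v ∈ insert ∅ π') : IsSetPartition S (addToBlock a π' v) := by
  have hrest : IsSetPartition (S.erase a \ v) (π'.erase v) := by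
    rcases mem_insert.1 hv with rfl | hv
    · simpa [erase_eq_of_notMem h.empty_notMem] using h
    · exact h.erase_of_mem hv
  have hvS : v ⊆ S.erase a := by
    rcases mem_insert.1 hv with rfl | hv
    · exact empty_subset _
    · exact h.1 v hv
  have hS : insert a v ∪ (S.erase a \ v) = S := by
    rw [insert_union, union_sdiff_of_subset hvS, insert_erase ha]
  rw [← hS]
  refine hrest.insert_of_disjoint (insert_nonempty a v) (disjoint_left.2 fun b hb hb' => ?_)
  obtain ⟨hb'a, hb'v⟩ := mem_sdiff.1 hb'
  rcases mem_insert.1 hb with rfl | hbv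
  · exact (mem_erase.1 hb'a).1 rfl
  · exact hb'v hbv

lemma blockOf_addToBlock (ha : a ∈ S) (h : IsSetPartition (S.erase a) π')
    (hv : v ∈ insert ∅ π') : blockOf (addToBlock a π' v) a = insert a v :=
  (h.addToBlock ha hv).blockOf_eq (mem_insert_self _ _) (mem_insert_self a v)

lemma prod_addToBlock {M : Type*} [CommMonoid M] (h : IsSetPartition (S.erase a) π')
    (F : Finset ℕ → M) : ∏ V ∈ addToBlock a π' v, F V = F (insert a v) * ∏ V ∈ π'.erase v, F V :=
  prod_insert fun hmem =>
    h.notMem_of_erase (mem_of_mem_erase hmem) (mem_insert_self a v)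

lemma removeFromBlock_addToBlock (ha : a ∈ S) (h : IsSetPartition (S.erase a) π')
    (hv : v ∈ insert ∅ π') : removeFromBlock a (addToBlock a π' v) = π' := by
  have hins : insert a v ∉ π'.erase v := fun hmem =>
    h.notMem_of_erase (mem_of_mem_erase hmem) (mem_insert_self a v)
  rw [removeFromBlock, blockOf_addToBlock ha h hv, erase_insert (h.notMem_of_mem_insert_empty hv),
    addToBlock, erase_insert hins]
  rcases mem_insert.1 hv with rfl | hv
  · rw [erase_eq_of_notMem h.empty_notMem, erase_insert h.empty_notMem]
  · rw [insert_erase hv, erase_eq_of_notMem h.empty_notMem]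

lemma erase_blockOf_mem_removeFromBlock (π : Finset (Finset ℕ)) (a : ℕ) :
    (blockOf π a).erase a ∈ insert ∅ (removeFromBlock a π) := by
  rcases eq_or_ne ((blockOf π a).erase a) ∅ with hempty | hne
  · exact hempty ▸ mem_insert_self _ _
  · exact mem_insert_of_mem (mem_erase.2 ⟨hne, mem_insert_self _ _⟩)

variable (h : IsSetPartition S π) (ha : a ∈ S)
include h ha

lemma IsSetPartition.removeFromBlock : IsSetPartition (S.erase a) (removeFromBlock a π) := by
  obtain ⟨hB, haB⟩ := h.blockOf_mem ha
  have hrest := h.erase_of_mem hB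
  rcases ((blockOf π a).erase a).eq_empty_or_nonempty with hempty | hne
  · have hB₁ : blockOf π a = {a} :=
      ((erase_eq_empty_iff _ _).1 hempty).resolve_left (ne_empty_of_mem haB)
    rw [hB₁, sdiff_singleton_eq_erase] at hrest
    rwa [_root_.removeFromBlock, hempty, hB₁, erase_insert hrest.empty_notMem]
  · have hS : (blockOf π a).erase a ∪ (S \ blockOf π a) = S.erase a := by
      have haS : a ∉ S \ blockOf π a := fun h' => (mem_sdiff.1 h').2 haB
      rw [← erase_eq_of_notMem haS, ← erase_union_distrib,
        union_sdiff_of_subset (h.1 _ hB)]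
    have hins := hrest.insert_of_disjoint hne
      (disjoint_left.2 fun b hb hb' => (mem_sdiff.1 hb').2 (mem_of_mem_erase hb))
    rw [hS] at hins
    rwa [_root_.removeFromBlock, erase_eq_of_notMem hins.empty_notMem]

lemma addToBlock_removeFromBlock :
    addToBlock a (removeFromBlock a π) ((blockOf π a).erase a) = π := by
  obtain ⟨hB, haB⟩ := h.blockOf_mem ha
  have hnot : (blockOf π a).erase a ∉ π.erase (blockOf π a) := fun hmem => by
    obtain ⟨b, hb⟩ := h.2.1 _ (mem_of_mem_erase hmem)
    exact ne_of_mem_erase hmem (h.block_eq (mem_of_mem_erase hmem) hB hb (mem_of_mem_erase hb))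
  rw [addToBlock, removeFromBlock, erase_right_comm, erase_insert hnot,
    erase_eq_of_notMem fun h0 => h.empty_notMem (mem_of_mem_erase h0), insert_erase haB,
    insert_erase hB]

end AddToBlock

lemma sum_setPartitions_eq_sum_addToBlock {M : Type*} [AddCommMonoid M] {S : Finset ℕ} {a : ℕ}
    (ha : a ∈ S) (g : Finset (Finset ℕ) → M) :
    ∑ π ∈ setPartitions S, g π =
      ∑ π' ∈ setPartitions (S.erase a), ∑ v ∈ insert ∅ π', g (addToBlock a π' v) := by
  rw [sum_sigma']
  refine sum_nbij' (fun π => ⟨removeFromBlock a π, (blockOf π a).erase a⟩)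
    (fun p => addToBlock a p.1 p.2) (fun π hπ => ?_) (fun p hp => ?_) (fun π hπ => ?_)
    (fun p hp => ?_) (fun π hπ => ?_)
  · have h := mem_setPartitions.1 (mem_coe.1 hπ)
    exact mem_sigma.2 ⟨mem_setPartitions.2 (h.removeFromBlock ha),
      erase_blockOf_mem_removeFromBlock π a⟩
  · obtain ⟨hp₁, hp₂⟩ := mem_sigma.1 (mem_coe.1 hp)
    exact mem_setPartitions.2 ((mem_setPartitions.1 hp₁).addToBlock ha hp₂)
  · exact addToBlock_removeFromBlock (mem_setPartitions.1 hπ) ha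
  · obtain ⟨hp₁, hp₂⟩ := mem_sigma.1 hp
    have h := mem_setPartitions.1 hp₁
    refine Sigma.ext (removeFromBlock_addToBlock ha h hp₂) (heq_of_eq ?_)
    rw [blockOf_addToBlock ha h hp₂, erase_insert (h.notMem_of_mem_insert_empty hp₂)]
  · rw [addToBlock_removeFromBlock (mem_setPartitions.1 hπ) ha]

/-- The Möbius function `μ(π, 1̂)` of the partition lattice, as a function of `k = #π`. -/
def cumulantWeight (k : ℕ) : ℂ :=
  (-1) ^ (k - 1) * ((k - 1).factorial : ℂ)

lemma cumulant_eq_sum_cumulantWeight [Monoid 𝔘] (ω : 𝔘 → ℂ) (A : ℕ → 𝔘)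
    (S : Finset ℕ) :
    cumulant ω A S = ∑ π ∈ setPartitions S, cumulantWeight #π * ∏ V ∈ π, ω (blockProd A V) :=
  rfl

lemma cumulantWeight_add_two_add (k : ℕ) :
    cumulantWeight (k + 2) + (k + 1) * cumulantWeight (k + 1) = 0 := by
  rw [cumulantWeight, cumulantWeight, show k + 2 - 1 = k + 1 by omega, Nat.add_sub_cancel,
    Nat.factorial_succ]
  push_cast
  ring

/-- This is the vanishing of classical cumulants with an entry `1` at position `a`, for
`f V = ω (∏_{i ∈ V} A_i)`. -/
lemma sum_cumulantWeight_mul_prod_erase_eq_zero {S : Finset ℕ} {a : ℕ} (ha : a ∈ S)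
    (hS : S.Nontrivial) (f : Finset ℕ → ℂ) (hf : f ∅ = 1) :
    ∑ π ∈ setPartitions S, cumulantWeight #π * ∏ V ∈ π, f (V.erase a) = 0 := by
  rw [sum_setPartitions_eq_sum_addToBlock ha]
  refine sum_eq_zero fun π' hπ' => ?_
  have h := mem_setPartitions.1 hπ'
  have hprod : ∀ v ∈ insert ∅ π', ∏ V ∈ addToBlock a π' v, f (V.erase a) = ∏ V ∈ π', f V := by
    intro v hv
    have hrest : ∏ V ∈ π'.erase v, f (V.erase a) = ∏ V ∈ π'.erase v, f V :=
      prod_congr rfl fun V hV =>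
        congrArg f (erase_eq_of_notMem (h.notMem_of_erase (mem_of_mem_erase hV)))
    rw [prod_addToBlock h, erase_insert (h.notMem_of_mem_insert_empty hv), hrest]
    rcases mem_insert.1 hv with rfl | hv
    · rw [hf, one_mul, erase_eq_of_notMem h.empty_notMem]
    · exact mul_prod_erase π' f hv
  have hcard : ∀ v ∈ π', #(addToBlock a π' v) = #π' := fun v hv => by
    rw [addToBlock, card_insert_of_notMem fun hmem =>
      h.notMem_of_erase (mem_of_mem_erase hmem) (mem_insert_self a v),
      card_erase_add_one hv]
  have hcard₀ : #(addToBlock a π' ∅) = #π' + 1 := by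
    rw [addToBlock, erase_eq_of_notMem h.empty_notMem, insert_empty,
      card_insert_of_notMem fun hmem => h.notMem_of_erase hmem (mem_singleton_self a)]
  obtain ⟨k, hk⟩ : ∃ k, #π' = k + 1 := by
    obtain ⟨b, hb⟩ := hS.erase_nonempty (a := a)
    obtain ⟨V, ⟨hV, -⟩, -⟩ := h.2.2 b hb
    exact ⟨#π' - 1, by have := card_pos.2 ⟨V, hV⟩; omega⟩
  rw [sum_insert h.empty_notMem,
    sum_congr rfl fun v hv => by rw [hprod v (mem_insert_of_mem hv), hcard v hv],
    hprod ∅ (mem_insert_self _ _), hcard₀, sum_const, nsmul_eq_mul, hk]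
  push_cast
  linear_combination (∏ V ∈ π', f V) * cumulantWeight_add_two_add k

lemma IsNonCrossing.mono {π π' : Finset (Finset ℕ)} (h : IsNonCrossing π') (hsub : π ⊆ π') :
    IsNonCrossing π := by
  rintro ⟨a, b, c, d, hab, hbc, hcd, V, hV, W, hW, hr⟩
  exact h ⟨a, b, c, d, hab, hbc, hcd, V, hsub hV, W, hsub hW, hr⟩

lemma IsNonCrossing.insert_singleton {π : Finset (Finset ℕ)} (h : IsNonCrossing π) (e : ℕ) :
    IsNonCrossing (insert {e} π) := by
  rintro ⟨a, b, c, d, hab, hbc, hcd, V, hV, W, hW, hVW, haV, hcV, hbW, hdW⟩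
  rcases mem_insert.1 hV with rfl | hV
  · rw [mem_singleton] at haV hcV
    omega
  rcases mem_insert.1 hW with rfl | hW
  · rw [mem_singleton] at hbW hdW
    omega
  exact h ⟨a, b, c, d, hab, hbc, hcd, V, hV, W, hW, hVW, haV, hcV, hbW, hdW⟩

lemma singleton_mem_ncPartitions {S : Finset ℕ} (hS : S.Nonempty) : {S} ∈ ncPartitions S := by
  refine mem_ncPartitions.2 ⟨IsSetPartition.mk' (by simp) (by simpa using hS)
    (fun a ha => ⟨S, mem_singleton_self S, ha⟩) (by simp), ?_⟩
  rintro ⟨-, -, -, -, -, -, -, V, hV, W, hW, hVW, -⟩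
  exact hVW ((mem_singleton.1 hV).trans (mem_singleton.1 hW).symm)

lemma ncPartitions_singleton (a : ℕ) : ncPartitions {a} = {{{a}}} := by
  refine eq_singleton_iff_unique_mem.2
    ⟨singleton_mem_ncPartitions (singleton_nonempty a), fun π hπ => ?_⟩
  have h := (mem_ncPartitions.1 hπ).1
  obtain ⟨V, ⟨hV, haV⟩, -⟩ := h.2.2 a (mem_singleton_self a)
  exact h.eq_singleton (subset_singleton_iff.1 (h.1 V hV) |>.resolve_left
    (ne_empty_of_mem haV) ▸ hV)

lemma sum_ncPartitions_filter_singleton_mem {M : Type*} [AddCommMonoid M] {S : Finset ℕ}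
    {a : ℕ} (ha : a ∈ S) (g : Finset (Finset ℕ) → M) :
    ∑ π ∈ (ncPartitions S).filter (({a} : Finset ℕ) ∈ ·), g π =
      ∑ π' ∈ ncPartitions (S.erase a), g (insert {a} π') := by
  have hnot : ∀ π' ∈ ncPartitions (S.erase a), ({a} : Finset ℕ) ∉ π' := fun π' hπ' hmem =>
    (mem_ncPartitions.1 hπ').1.notMem_of_erase hmem (mem_singleton_self a)
  refine sum_nbij' (·.erase {a}) (insert {a}) (fun π hπ => ?_) (fun π' hπ' => ?_)
    (fun π hπ => insert_erase (mem_filter.1 hπ).2) (fun π' hπ' => erase_insert (hnot π' hπ'))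
    (fun π hπ => by rw [insert_erase (mem_filter.1 hπ).2])
  · obtain ⟨hπ, haπ⟩ := mem_filter.1 hπ
    obtain ⟨h, hnc⟩ := mem_ncPartitions.1 hπ
    have := h.erase_of_mem haπ
    rw [sdiff_singleton_eq_erase] at this
    exact mem_ncPartitions.2 ⟨this, hnc.mono (erase_subset _ _)⟩
  · obtain ⟨h, hnc⟩ := mem_ncPartitions.1 hπ'
    have := h.insert_of_disjoint (singleton_nonempty a) (by simp)
    rw [← insert_eq, insert_erase ha] at this
    exact mem_filter.2 ⟨mem_ncPartitions.2 ⟨this, hnc.insert_singleton a⟩, mem_insert_self _ _⟩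

section BlockList

variable {A : ℕ → 𝔘} {u : 𝔘} {V : Finset ℕ} {a : ℕ}

lemma sort_eq_cons_sort_erase (h : IsLeast (V : Set ℕ) a) :
    V.sort (· ≤ ·) = a :: (V.erase a).sort (· ≤ ·) := by
  conv_lhs => rw [← insert_erase (mem_coe.1 h.1)]
  exact sort_insert _ (fun b hb => h.2 (mem_of_mem_erase hb)) (notMem_erase a V)

lemma blockList_update_of_notMem (h : a ∉ V) :
    blockList (Function.update A a u) V = blockList A V :=
  List.map_congr_left fun _ hb =>
    Function.update_of_ne (ne_of_mem_of_not_mem ((mem_sort _).1 hb) h) _ _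

lemma blockList_update_of_isLeast (h : IsLeast (V : Set ℕ) a) :
    blockList (Function.update A a u) V = u :: blockList A (V.erase a) := by
  rw [blockList, sort_eq_cons_sort_erase h, List.map_cons, Function.update_self]
  exact congrArg _ (blockList_update_of_notMem (notMem_erase a V))

lemma blockProd_update_of_isLeast [Monoid 𝔘] (h : IsLeast (V : Set ℕ) a) :
    blockProd (Function.update A a u) V = u * blockProd A (V.erase a) := by
  rw [blockProd, blockList_update_of_isLeast h, List.prod_cons, blockProd]

lemma blockProd_update_of_notMem [Monoid 𝔘] (h : a ∉ V) :
    blockProd (Function.update A a u) V = blockProd A V := by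
  rw [blockProd, blockList_update_of_notMem h, blockProd]

end BlockList

section Cumulants

variable [Monoid 𝔘] {ω : 𝔘 → ℂ} {S : Finset ℕ} {a : ℕ}

lemma IsFreeCumulantFamily.apply_singleton {κ : List 𝔘 → ℂ} (hκ : IsFreeCumulantFamily ω κ)
    (u : 𝔘) : κ [u] = ω u := by
  have := hκ (fun _ => u) {0} (singleton_nonempty 0)
  rwa [ncPartitions_singleton, sum_singleton, prod_singleton, blockProd, blockList,
    sort_singleton, List.map_singleton, List.prod_singleton, eq_comm] at this

/-- The moment-cumulant formula at `S`, with the full partition `{S}`, the partitions in which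
`a` is a singleton, and the remaining ones separated. -/
theorem IsFreeCumulantFamily.apply_update_eq {κ : List 𝔘 → ℂ} (hκ : IsFreeCumulantFamily ω κ)
    (A : ℕ → 𝔘) (u : 𝔘) (ha : IsLeast (S : Set ℕ) a) (hS : S.Nontrivial) :
    κ (blockList (Function.update A a u) S) =
      (ω (u * blockProd A (S.erase a)) - ω u * ω (blockProd A (S.erase a))) -
        ∑ π ∈ ((ncPartitions S).filter (({a} : Finset ℕ) ∉ ·)).erase {S},
          κ (blockList (Function.update A a u) (blockOf π a)) *
            ∏ V ∈ π.erase (blockOf π a), κ (blockList A V) := by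
  set A' := Function.update A a u
  have hfull : {S} ∈ (ncPartitions S).filter (({a} : Finset ℕ) ∉ ·) :=
    mem_filter.2 ⟨singleton_mem_ncPartitions hS.nonempty,
      fun h => hS.ne_singleton (mem_singleton.1 h).symm⟩
  have hsingle : ∑ π' ∈ ncPartitions (S.erase a), ∏ V ∈ insert {a} π', κ (blockList A' V) =
      ω u * ω (blockProd A (S.erase a)) := by
    have hu : blockList A' {a} = [u] := by
      rw [blockList_update_of_isLeast (by simp), erase_singleton]
      simp [blockList]
    rw [hκ A _ hS.erase_nonempty, mul_sum]
    refine sum_congr rfl fun π' hπ' => ?_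
    have h := (mem_ncPartitions.1 hπ').1
    rw [prod_insert fun hmem => h.notMem_of_erase hmem (mem_singleton_self a), hu,
      hκ.apply_singleton]
    exact congrArg _ (prod_congr rfl fun V hV =>
      congrArg κ (blockList_update_of_notMem (h.notMem_of_erase hV)))
  have hrest : ∀ π ∈ ((ncPartitions S).filter (({a} : Finset ℕ) ∉ ·)).erase {S},
      ∏ V ∈ π, κ (blockList A' V) =
        κ (blockList A' (blockOf π a)) * ∏ V ∈ π.erase (blockOf π a), κ (blockList A V) :=
    fun π hπ => IsSetPartition.prod_eq_mul_prod_erase_blockOf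
      (mem_ncPartitions.1 (mem_filter.1 (mem_of_mem_erase hπ)).1).1 ha.1
      fun V haV => congrArg κ (blockList_update_of_notMem haV)
  have hmom := hκ A' S hS.nonempty
  rw [blockProd_update_of_isLeast ha, ← sum_filter_add_sum_filter_not _ (({a} : Finset ℕ) ∈ ·),
    sum_ncPartitions_filter_singleton_mem ha.1, hsingle, ← add_sum_erase _ _ hfull,
    prod_singleton, sum_congr rfl hrest] at hmom
  linear_combination -hmom

theorem cumulant_update_eq (hω : ω 1 = 1) (A : ℕ → 𝔘) (u : 𝔘) (ha : IsLeast (S : Set ℕ) a)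
    (hS : S.Nontrivial) :
    cumulant ω (Function.update A a u) S =
      ∑ π ∈ setPartitions S,
        (cumulantWeight #π * ∏ V ∈ π.erase (blockOf π a), ω (blockProd A V)) *
          (ω (u * blockProd A ((blockOf π a).erase a)) -
            ω u * ω (blockProd A ((blockOf π a).erase a))) := by
  have hunit := sum_cumulantWeight_mul_prod_erase_eq_zero ha.1 hS (fun V => ω (blockProd A V))
    (by rw [blockProd, blockList, sort_empty, List.map_nil, List.prod_nil, hω])
  rw [cumulant_eq_sum_cumulantWeight, ← sub_zero (∑ π ∈ _, _), ← mul_zero (ω u), ← hunit,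
    mul_sum, ← sum_sub_distrib]
  refine sum_congr rfl fun π hπ => ?_
  have h := mem_setPartitions.1 hπ
  rw [h.prod_eq_mul_prod_erase_blockOf (F := fun V => ω (blockProd (Function.update A a u) V))
      ha.1 fun V haV => congrArg ω (blockProd_update_of_notMem haV),
    h.prod_eq_mul_prod_erase_blockOf (F := fun V => ω (blockProd A (V.erase a)))
      (G := fun V => ω (blockProd A V)) ha.1
      fun V haV => by rw [erase_eq_of_notMem haV],
    blockProd_update_of_isLeast (h.isLeast_blockOf ha)]
  ring

variable {X : Type*} (M : Submodule ℂ (X → ℂ)) {u : X → 𝔘}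

theorem cumulant_update_mem (hω : ω 1 = 1)
    (hcov : ∀ B, (fun x => ω (u x * B) - ω (u x) * ω B) ∈ M) (A : ℕ → 𝔘)
    (ha : IsLeast (S : Set ℕ) a) (hS : S.Nontrivial) :
    (fun x => cumulant ω (Function.update A a (u x)) S) ∈ M := by
  have : (fun x => cumulant ω (Function.update A a (u x)) S) =
      ∑ π ∈ setPartitions S,
        (cumulantWeight #π * ∏ V ∈ π.erase (blockOf π a), ω (blockProd A V)) •
          fun x => ω (u x * blockProd A ((blockOf π a).erase a)) -
            ω (u x) * ω (blockProd A ((blockOf π a).erase a)) := by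
    ext x
    simp only [cumulant_update_eq hω A (u x) ha hS, Finset.sum_apply, Pi.smul_apply, smul_eq_mul]
  rw [this]
  exact M.sum_mem fun π _ => M.smul_mem _ (hcov _)

theorem IsFreeCumulantFamily.apply_update_mem {κ : List 𝔘 → ℂ} (hκ : IsFreeCumulantFamily ω κ)
    (hcov : ∀ B, (fun x => ω (u x * B) - ω (u x) * ω B) ∈ M) (A : ℕ → 𝔘) :
    IsLeast (S : Set ℕ) a → S.Nontrivial →
      (fun x => κ (blockList (Function.update A a (u x)) S)) ∈ M := by
  induction S using Finset.strongInduction with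
  | H S ih =>
  intro ha hS
  have : (fun x => κ (blockList (Function.update A a (u x)) S)) =
      (fun x => ω (u x * blockProd A (S.erase a)) - ω (u x) * ω (blockProd A (S.erase a))) -
        ∑ π ∈ ((ncPartitions S).filter (({a} : Finset ℕ) ∉ ·)).erase {S},
          (∏ V ∈ π.erase (blockOf π a), κ (blockList A V)) •
            fun x => κ (blockList (Function.update A a (u x)) (blockOf π a)) := by
    ext x
    simp only [hκ.apply_update_eq A (u x) ha hS, Pi.sub_apply, Finset.sum_apply, Pi.smul_apply,
      smul_eq_mul, mul_comm]
  rw [this]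
  refine M.sub_mem (hcov _) (M.sum_mem fun π hπ => M.smul_mem _ ?_)
  obtain ⟨hfull, hπ⟩ := mem_erase.1 hπ
  obtain ⟨hπ, hsingle⟩ := mem_filter.1 hπ
  have h := (mem_ncPartitions.1 hπ).1
  exact ih _ (h.blockOf_ssubset ha.1 hfull) (h.isLeast_blockOf ha)
    (h.blockOf_nontrivial ha.1 hsingle)

end Cumulants

section State

variable [NormedRing 𝔘] [StarRing 𝔘] [CStarRing 𝔘] [NormedAlgebra ℂ 𝔘]
  [StarModule ℂ 𝔘] [CompleteSpace 𝔘] {ω : 𝔘 →ₗ[ℂ] ℂ}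

open scoped ComplexOrder in
lemma IsState.exists_norm_apply_le (hω : IsState ω) : ∃ C : NNReal, ∀ a, ‖ω a‖ ≤ C * ‖a‖ := by
  let : CStarAlgebra 𝔘 := ⟨⟩
  let := CStarAlgebra.spectralOrder 𝔘
  let := CStarAlgebra.spectralOrderedRing 𝔘
  have hpos : ∀ a : 𝔘, 0 ≤ a → 0 ≤ ω a := fun a ha => by
    obtain ⟨b, rfl⟩ := CStarAlgebra.nonneg_iff_eq_star_mul_self.1 ha
    exact Complex.nonneg_iff.2 ⟨(hω.positive b).1, (hω.positive b).2.symm⟩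
  exact (PositiveLinearMap.mk₀ ω hpos).exists_norm_apply_le

open MeasureTheory in
lemma IsState.integrableOn_apply_mul {G : Type*} [MeasurableSpace G] {μ : Measure G}
    (hω : IsState ω) (α : G → 𝔘 ≃⋆ₐ[ℂ] 𝔘) (A B : 𝔘)
    (hm : Measurable fun x => ω (α x A * B)) {s : Set G} (hs : μ s < ⊤) :
    IntegrableOn (fun x => ω (α x A * B)) s μ := by
  let : CStarAlgebra 𝔘 := ⟨⟩
  obtain ⟨C, hC⟩ := hω.exists_norm_apply_le
  refine IntegrableOn.of_bound hs hm.aestronglyMeasurable (C * (‖A‖ * ‖B‖))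
    (ae_of_all _ fun x => (hC _).trans ?_)
  gcongr
  exact (norm_mul_le _ _).trans_eq (by rw [StarAlgEquiv.norm_map])

end State

section VanishingAverages

open MeasureTheory

variable {G ι : Type*} [MeasurableSpace G]

def vanishingAverages (μ : Measure G) (U : ι → Set G) (l : Filter ι) : Submodule ℂ (G → ℂ) where
  carrier := {f | (∀ i, IntegrableOn f (U i) μ) ∧
    Tendsto (fun i => (μ (U i)).toReal⁻¹ • ∫ x in U i, f x ∂μ) l (𝓝 0)}
  zero_mem' := ⟨fun _ => integrableOn_zero, by
    simpa only [Pi.zero_apply, integral_zero, smul_zero] using tendsto_const_nhds⟩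
  add_mem' := fun {f g} hf hg => ⟨fun i => (hf.1 i).add (hg.1 i), by
    simpa only [Pi.add_apply, integral_add (hf.1 _) (hg.1 _), smul_add, add_zero] using
      hf.2.add hg.2⟩
  smul_mem' := fun c f hf => ⟨fun i => (hf.1 i).smul c, by
    simpa only [Pi.smul_apply, integral_smul, smul_comm _ c, smul_zero] using hf.2.const_smul c⟩

end VanishingAverages

open MeasureTheory in
theorem cumulant_mean_clustering_general {G ι : Type*} [MeasurableSpace G]
    [NormedRing 𝔘] [StarRing 𝔘] [CStarRing 𝔘] [NormedAlgebra ℂ 𝔘] [StarModule ℂ 𝔘]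
    [CompleteSpace 𝔘]
    (μ : Measure G)
    (α : G → 𝔘 ≃⋆ₐ[ℂ] 𝔘)
    (ω : 𝔘 →ₗ[ℂ] ℂ) (hω : IsState ω)
    (l : Filter ι) (U : ι → Set G)
    (hUfin : ∀ i, μ (U i) < ⊤)
    (hmeas : ∀ A B : 𝔘, Measurable fun x : G => ω (α x A * B))
    (hcl : ∀ A B : 𝔘, Filter.Tendsto
      (fun i => (μ (U i)).toReal⁻¹ •
        ∫ x in U i, (ω (α x A * B) - ω (α x A) * ω B) ∂μ) l (𝓝 0)) :
    ∀ n, 2 ≤ n → ∀ A : ℕ → 𝔘,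
      Filter.Tendsto
        (fun i => (μ (U i)).toReal⁻¹ •
          ∫ x in U i,
            cumulant ⇑ω (Function.update A 1 (α x (A 1))) (Finset.Icc 1 n) ∂μ)
        l (𝓝 0) ∧
      ∀ κ : List 𝔘 → ℂ, IsFreeCumulantFamily ⇑ω κ →
        Filter.Tendsto
          (fun i => (μ (U i)).toReal⁻¹ •
            ∫ x in U i,
              κ (blockList (Function.update A 1 (α x (A 1))) (Finset.Icc 1 n)) ∂μ)
          l (𝓝 0) := by
  intro n hn A
  have hcov : ∀ B, (fun x => ω (α x (A 1) * B) - ω (α x (A 1)) * ω B) ∈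
      vanishingAverages μ U l := fun B => by
    refine ⟨fun i => ?_, hcl (A 1) B⟩
    have hA := hω.integrableOn_apply_mul α (A 1) 1 (hmeas _ 1) (hUfin i)
    simp only [mul_one] at hA
    exact (hω.integrableOn_apply_mul α _ B (hmeas _ B) (hUfin i)).sub (hA.mul_const _)
  have ha : IsLeast (Finset.Icc 1 n : Set ℕ) 1 :=
    ⟨Finset.mem_Icc.2 ⟨le_rfl, by omega⟩, fun b hb => (Finset.mem_Icc.1 hb).1⟩
  have hS : (Finset.Icc 1 n).Nontrivial :=
    ⟨1, Finset.mem_Icc.2 ⟨le_rfl, by omega⟩, 2, Finset.mem_Icc.2 ⟨by omega, hn⟩, by omega⟩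
  exact ⟨(cumulant_update_mem _ hω.unital hcov A ha hS).2,
    fun κ hκ => (hκ.apply_update_mem _ hcov A ha hS).2⟩

open MeasureTheory in
/-- mean clustering (ergodicity) for the covariance extends to all higher
classical and free cumulants: their averages over the sets U_i vanish along the net. -/
theorem cumulant_mean_clustering {G ι : Type*} [CommGroup G] [TopologicalSpace G]
    [IsTopologicalGroup G] [LocallyCompactSpace G] [MeasurableSpace G] [BorelSpace G]
    [NormedRing 𝔘] [StarRing 𝔘] [CStarRing 𝔘] [NormedAlgebra ℂ 𝔘] [StarModule ℂ 𝔘]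
    [CompleteSpace 𝔘]
    (μ : Measure G) [μ.IsHaarMeasure]
    (α : G → 𝔘 ≃⋆ₐ[ℂ] 𝔘) (hα : IsStarAutoRep α)
    (ω : 𝔘 →ₗ[ℂ] ℂ) (hω : IsState ω)
    (l : Filter ι) (U : ι → Set G)
    (hUmeas : ∀ i, MeasurableSet (U i))
    (hUpos : ∀ i, 0 < μ (U i)) (hUfin : ∀ i, μ (U i) < ⊤)
    (hmeas : ∀ A B : 𝔘, Measurable fun x : G => ω (α x A * B))
    (hcl : ∀ A B : 𝔘, Filter.Tendsto
      (fun i => (μ (U i)).toReal⁻¹ •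
        ∫ x in U i, (ω (α x A * B) - ω (α x A) * ω B) ∂μ) l (𝓝 0)) :
    ∀ n, 2 ≤ n → ∀ A : ℕ → 𝔘,
      Filter.Tendsto
        (fun i => (μ (U i)).toReal⁻¹ •
          ∫ x in U i,
            cumulant ⇑ω (Function.update A 1 (α x (A 1))) (Finset.Icc 1 n) ∂μ)
        l (𝓝 0) ∧
      ∀ κ : List 𝔘 → ℂ, IsFreeCumulantFamily ⇑ω κ →
        Filter.Tendsto
          (fun i => (μ (U i)).toReal⁻¹ •
            ∫ x in U i,
              κ (blockList (Function.update A 1 (α x (A 1))) (Finset.Icc 1 n)) ∂μ)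
          l (𝓝 0) :=
  cumulant_mean_clustering_general μ α ω hω l U hUfin hmeas hcl
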